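/- arXiv:1102.2212 — 7 statements merged into one kernel-verified Lean document; each statement's English description precedes it below -/
import Mathlib

section
/- Let M be a symmetric negative definite real n×n matrix all of whose off-diagonal entries are non-negative. Then every entry of the inverse matrix M⁻¹ is non-positive. -/
/-!
Let `x` be a column of `M⁻¹`, so `M x = eⱼ ≥ 0`, and split `x = x⁺ - x⁻`. Since `x⁺` and `x⁻`
have disjoint supports and the off-diagonal entries of `M` are non-negative, `x⁺ᵀ M x⁻ ≥ 0`;
also `x⁺ᵀ M x ≥ 0`. Hence `x⁺ᵀ M x⁺ = x⁺ᵀ M x + x⁺ᵀ M x⁻ ≥ 0`, which by negative definiteness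
forces `x⁺ = 0`, i.e. `x ≤ 0`.
-/

open Matrix

namespace Matrix

variable {ι R : Type*} [Fintype ι]

lemma dotProduct_mulVec_nonneg_of_disjoint [CommSemiring R] [PartialOrder R] [IsOrderedRing R]
    {M : Matrix ι ι R} (hoff : ∀ i j, i ≠ j → 0 ≤ M i j) {u v : ι → R}
    (hu : 0 ≤ u) (hv : 0 ≤ v) (huv : ∀ i, u i * v i = 0) :
    0 ≤ u ⬝ᵥ M *ᵥ v := by
  simp only [dotProduct, mulVec, Finset.mul_sum]
  refine Finset.sum_nonneg fun i _ => ?_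
  refine Finset.sum_nonneg fun j _ => ?_
  rcases eq_or_ne i j with rfl | hij
  · rw [mul_left_comm, huv i, mul_zero]
  · exact mul_nonneg (hu i) (mul_nonneg (hoff i j hij) (hv j))

lemma posPart_mul_negPart_eq_zero [Ring R] [LinearOrder R] [IsOrderedRing R] (a : R) :
    a⁺ * a⁻ = 0 := by
  rcases le_total a 0 with ha | ha
  · rw [posPart_eq_zero.2 ha, zero_mul]
  · rw [negPart_eq_zero.2 ha, mul_zero]

lemma det_ne_zero_of_dotProduct_mulVec_neg [CommRing R] [IsDomain R] [Preorder R] [DecidableEq ι]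
    {M : Matrix ι ι R} (hneg : ∀ x : ι → R, x ≠ 0 → x ⬝ᵥ M *ᵥ x < 0) : M.det ≠ 0 := by
  rw [Ne, ← exists_mulVec_eq_zero_iff]
  rintro ⟨x, hx, hMx⟩
  simpa [hMx] using hneg x hx

variable [CommRing R] [LinearOrder R] [IsOrderedRing R]

lemma nonpos_of_mulVec_nonneg {M : Matrix ι ι R} (hoff : ∀ i j, i ≠ j → 0 ≤ M i j)
    (hneg : ∀ x : ι → R, x ≠ 0 → x ⬝ᵥ M *ᵥ x < 0) {x : ι → R} (hMx : 0 ≤ M *ᵥ x) :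
    x ≤ 0 := by
  have hcross : 0 ≤ x⁺ ⬝ᵥ M *ᵥ x⁻ :=
    dotProduct_mulVec_nonneg_of_disjoint hoff (posPart_nonneg x) (negPart_nonneg x)
      fun i => posPart_mul_negPart_eq_zero (x i)
  have hpos : 0 ≤ x⁺ ⬝ᵥ M *ᵥ x⁺ := by
    have hsplit : x⁺ = x + x⁻ := (eq_sub_iff_add_eq.1 (posPart_sub_negPart x).symm).symm
    calc 0 ≤ x⁺ ⬝ᵥ M *ᵥ x + x⁺ ⬝ᵥ M *ᵥ x⁻ :=
          add_nonneg (dotProduct_nonneg_of_nonneg (posPart_nonneg x) hMx) hcross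
      _ = x⁺ ⬝ᵥ M *ᵥ x⁺ := by
          conv_rhs => rw [hsplit]
          rw [mulVec_add, dotProduct_add, ← hsplit]
  have hzero : x⁺ = 0 := by
    by_contra hne
    exact (hneg _ hne).not_ge hpos
  exact posPart_eq_zero.1 hzero

end Matrix

theorem inv_entries_nonpos_general (n : ℕ) (M : Matrix (Fin n) (Fin n) ℝ)
    (hneg : ∀ x : Fin n → ℝ, x ≠ 0 → x ⬝ᵥ M.mulVec x < 0)
    (hoff : ∀ i j, i ≠ j → 0 ≤ M i j) :
    ∀ i j, M⁻¹ i j ≤ 0 := by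
  have hdet : IsUnit M.det := (det_ne_zero_of_dotProduct_mulVec_neg hneg).isUnit
  intro i j
  have hcol : M *ᵥ M⁻¹.col j = Pi.single j 1 := by
    rw [← mulVec_single_one, mulVec_mulVec, mul_nonsing_inv M hdet, one_mulVec]
  exact nonpos_of_mulVec_nonneg hoff hneg (hcol ▸ Pi.single_nonneg.2 zero_le_one) i

/-- Lemma 3.2 of the paper: a symmetric negative definite real `n × n` matrix all of whose
off-diagonal entries are non-negative has an inverse all of whose entries are non-positive. -/
theorem inv_entries_nonpos (n : ℕ) (M : Matrix (Fin n) (Fin n) ℝ)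
    (hsymm : M.IsSymm)
    (hneg : ∀ x : Fin n → ℝ, x ≠ 0 → x ⬝ᵥ M.mulVec x < 0)
    (hoff : ∀ i j, i ≠ j → 0 ≤ M i j) :
    ∀ i j, M⁻¹ i j ≤ 0 :=
  inv_entries_nonpos_general n M hneg hoff
end

section
/- Let M be a symmetric negative definite integer n×n matrix with non-negative off-diagonal entries, and suppose a ∈ ℤⁿ with a_i ≥ 0 for all i satisfies Ma = (-1 + b_0, b_1, ..., b_{n-1})ᵀ where all b_i ≥ 0 and b_j > 0 for some j ≠ 0. Then b_0 = 0. -/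
open Matrix

/-! Since `b 0 ≥ 1` would make `M a` entrywise non-negative, `a ⬝ᵥ M a ≥ 0` would force `a = 0` by
negative definiteness, contradicting `(M a) j = b j > 0`. -/

theorem Matrix.eq_zero_of_nonneg_of_mulVec_nonneg {ι R : Type*} [Fintype ι] [Semiring R]
    [PartialOrder R] [IsOrderedRing R] {M : Matrix ι ι R}
    (hneg : ∀ x : ι → R, x ≠ 0 → x ⬝ᵥ M *ᵥ x < 0) {x : ι → R} (hx : 0 ≤ x)
    (hMx : 0 ≤ M *ᵥ x) : x = 0 :=
  by_contra fun h => (hneg x h).not_ge (dotProduct_nonneg_of_nonneg hx hMx)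

theorem b_zero_eq_zero_general (n : ℕ) (hn : 0 < n) (M : Matrix (Fin n) (Fin n) ℤ)
    (hneg : ∀ x : Fin n → ℤ, x ≠ 0 → x ⬝ᵥ M.mulVec x < 0)
    (a b : Fin n → ℤ) (ha : ∀ i, 0 ≤ a i) (hb : ∀ i, 0 ≤ b i)
    (j : Fin n) (hj : j ≠ ⟨0, hn⟩) (hbj : 0 < b j)
    (hMa : M.mulVec a = fun i => if i = ⟨0, hn⟩ then -1 + b i else b i) :
    b ⟨0, hn⟩ = 0 := by
  by_contra hb0
  have hMa_nonneg : 0 ≤ M *ᵥ a := fun i => by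
    rw [hMa, Pi.zero_apply]
    dsimp only
    split_ifs with hi
    · subst hi; have := hb ⟨0, hn⟩; omega
    · exact hb i
  have ha0 : a = 0 := eq_zero_of_nonneg_of_mulVec_nonneg hneg ha hMa_nonneg
  have hMa_j := congrFun hMa j
  simp only [ha0, mulVec_zero, Pi.zero_apply, if_neg hj] at hMa_j
  omega

/-- Part of Corollary 3.3: if `M` is a symmetric negative definite integer matrix with
non-negative off-diagonal entries and `M a = (-1 + b 0, b 1, ..., b (n-1))` with `a, b`
entrywise non-negative and `b j > 0` for some `j ≠ 0`, then `b 0 = 0`. -/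
theorem b_zero_eq_zero (n : ℕ) (hn : 0 < n) (M : Matrix (Fin n) (Fin n) ℤ)
    (hsymm : M.IsSymm)
    (hneg : ∀ x : Fin n → ℤ, x ≠ 0 → x ⬝ᵥ M.mulVec x < 0)
    (hoff : ∀ i j, i ≠ j → 0 ≤ M i j)
    (a b : Fin n → ℤ) (ha : ∀ i, 0 ≤ a i) (hb : ∀ i, 0 ≤ b i)
    (j : Fin n) (hj : j ≠ ⟨0, hn⟩) (hbj : 0 < b j)
    (hMa : M.mulVec a = fun i => if i = ⟨0, hn⟩ then -1 + b i else b i) :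
    b ⟨0, hn⟩ = 0 :=
  b_zero_eq_zero_general n hn M hneg a b ha hb j hj hbj hMa
end

section
/- Let M be a symmetric negative definite integer n×n matrix with non-negative off-diagonal entries, and suppose a ∈ ℤⁿ with a_i ≥ 0 satisfies (Ma)_0 = -1 and (Ma)_i ≥ 0 for all i ≥ 1. Then a_0 > 0. -/
/-! If `a₀ = 0`, every term `aᵢ (M a)ᵢ` of `aᵀ M a` is non-negative, so negative definiteness
forces `a = 0`, which contradicts `(M a)₀ = -1`. -/

open Matrix

section

variable {ι R : Type*} [Fintype ι] [CommRing R] [LinearOrder R] [IsStrictOrderedRing R]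

theorem dotProduct_mulVec_self_nonneg_of_nonneg (M : Matrix ι ι R) {x : ι → R}
    (hx : ∀ i, 0 ≤ x i) (hMx : ∀ i, x i ≠ 0 → 0 ≤ (M *ᵥ x) i) :
    0 ≤ x ⬝ᵥ M *ᵥ x := by
  refine Finset.sum_nonneg fun i _ => ?_
  by_cases hi : x i = 0
  · simp [hi]
  · exact mul_nonneg (hx i) (hMx i hi)

theorem eq_zero_of_nonneg_of_mulVec_nonneg_on_support {M : Matrix ι ι R}
    (hneg : ∀ x : ι → R, x ≠ 0 → x ⬝ᵥ M *ᵥ x < 0) {x : ι → R}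
    (hx : ∀ i, 0 ≤ x i) (hMx : ∀ i, x i ≠ 0 → 0 ≤ (M *ᵥ x) i) : x = 0 := by
  by_contra hne
  exact (hneg x hne).not_ge (dotProduct_mulVec_self_nonneg_of_nonneg M hx hMx)

end

theorem a_zero_pos_general (n : ℕ) (hn : 0 < n) (M : Matrix (Fin n) (Fin n) ℤ)
    (hneg : ∀ x : Fin n → ℤ, x ≠ 0 → x ⬝ᵥ M.mulVec x < 0)
    (a : Fin n → ℤ) (ha : ∀ i, 0 ≤ a i)
    (hMa0 : M.mulVec a ⟨0, hn⟩ = -1)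
    (hMai : ∀ i, i ≠ ⟨0, hn⟩ → 0 ≤ M.mulVec a i) :
    0 < a ⟨0, hn⟩ := by
  refine (ha _).lt_of_ne fun ha0 => ?_
  have hMa : ∀ i, a i ≠ 0 → 0 ≤ (M *ᵥ a) i := fun i hai =>
    hMai i fun hi => hai (hi ▸ ha0.symm)
  have hzero : a = 0 := eq_zero_of_nonneg_of_mulVec_nonneg_on_support hneg ha hMa
  simp [hzero] at hMa0

/-- Corollary 3.3: if `M` is a symmetric negative definite integer matrix with non-negative
off-diagonal entries, `a` is entrywise non-negative, `(M a)_0 = -1` and `(M a)_i ≥ 0` for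
`i ≥ 1`, then `a_0 > 0`. -/
theorem a_zero_pos (n : ℕ) (hn : 0 < n) (M : Matrix (Fin n) (Fin n) ℤ)
    (hsymm : M.IsSymm)
    (hneg : ∀ x : Fin n → ℤ, x ≠ 0 → x ⬝ᵥ M.mulVec x < 0)
    (hoff : ∀ i j, i ≠ j → 0 ≤ M i j)
    (a : Fin n → ℤ) (ha : ∀ i, 0 ≤ a i)
    (hMa0 : M.mulVec a ⟨0, hn⟩ = -1)
    (hMai : ∀ i, i ≠ ⟨0, hn⟩ → 0 ≤ M.mulVec a i) :
    0 < a ⟨0, hn⟩ :=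
  a_zero_pos_general n hn M hneg a ha hMa0 hMai
end

section
/- Let v_1, ..., v_n be a basis of ℝⁿ (with the standard inner product) such that ⟨v_i, v_j⟩ ≤ 0 for all i ≠ j. Let w_1, ..., w_n be the dual basis, i.e. ⟨v_i, w_j⟩ = δ_{ij}. Then ⟨w_i, w_j⟩ ≥ 0 for all i, j. -/
/-!
Write `w i = ∑ k, c k • v k`; duality gives `c k = ⟪w i, w k⟫` and `⟪v k, w i⟫ ≥ 0`. Split
`c = c⁺ - c⁻` and put `q = ∑ k, (c k)⁻ • v k`, `p = ∑ k, (c k)⁺ • v k`. Since `c⁺` and `c⁻` have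
disjoint supports, only off-diagonal (obtuse) terms enter `⟪q, p⟫`, so `⟪q, p⟫ ≤ 0`, while
`⟪q, w i⟫ ≥ 0`. Hence `‖q‖² = ⟪q, p⟫ - ⟪q, w i⟫ ≤ 0`, so `q = 0` and `c⁻ = 0` by independence.
-/

open scoped RealInnerProductSpace

section ObtuseSystem

variable {ι E : Type*} [Fintype ι] [NormedAddCommGroup E] [InnerProductSpace ℝ E] {v : ι → E}

theorem inner_sum_smul_sum_smul_nonpos (hangle : Pairwise fun i j => ⟪v i, v j⟫ ≤ 0)
    {a b : ι → ℝ} (ha : 0 ≤ a) (hb : 0 ≤ b) (hab : ∀ k, a k * b k = 0) :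
    ⟪∑ k, a k • v k, ∑ l, b l • v l⟫ ≤ 0 := by
  rw [sum_inner]
  refine Finset.sum_nonpos fun k _ => ?_
  rw [inner_sum]
  refine Finset.sum_nonpos fun l _ => ?_
  rw [real_inner_smul_left, real_inner_smul_right]
  rcases eq_or_ne k l with rfl | hkl
  · rw [← mul_assoc, hab, zero_mul]
  · exact mul_nonpos_of_nonneg_of_nonpos (ha k) (mul_nonpos_of_nonneg_of_nonpos (hb l) (hangle hkl))

theorem nonneg_of_inner_sum_smul_nonneg (hindep : LinearIndependent ℝ v)
    (hangle : Pairwise fun i j => ⟪v i, v j⟫ ≤ 0) {c : ι → ℝ}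
    (hc : ∀ k, 0 ≤ ⟪v k, ∑ l, c l • v l⟫) : 0 ≤ c := by
  set q := ∑ k, (c k)⁻ • v k
  set p := ∑ k, (c k)⁺ • v k
  have hsplit : ∑ l, c l • v l = p - q := by
    simp only [p, q, ← Finset.sum_sub_distrib, ← sub_smul, posPart_sub_negPart]
  have hqp : ⟪q, p⟫ ≤ 0 :=
    inner_sum_smul_sum_smul_nonpos hangle (fun k => negPart_nonneg _) (fun k => posPart_nonneg _)
      fun k => by rcases le_total (c k) 0 with h | h <;> simp [h]
  have hqx : 0 ≤ ⟪q, ∑ l, c l • v l⟫ := by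
    simp only [q, sum_inner, real_inner_smul_left]
    exact Finset.sum_nonneg fun k _ => mul_nonneg (negPart_nonneg _) (hc k)
  have hq : q = 0 := by
    refine real_inner_self_nonpos.mp ?_
    have : ⟪q, q⟫ = ⟪q, p⟫ - ⟪q, ∑ l, c l • v l⟫ := by rw [hsplit, inner_sub_right]; ring
    linarith
  intro k
  exact negPart_eq_zero.mp (Fintype.linearIndependent_iff.mp hindep _ hq k)

end ObtuseSystem

theorem inner_sum_smul_of_inner_eq_ite {ι E : Type*} [Fintype ι] [DecidableEq ι]
    [NormedAddCommGroup E] [InnerProductSpace ℝ E] {v w : ι → E}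
    (hdual : ∀ i j, ⟪v i, w j⟫ = if i = j then (1 : ℝ) else 0) (c : ι → ℝ) (j : ι) :
    ⟪∑ k, c k • v k, w j⟫ = c j := by
  simp [sum_inner, real_inner_smul_left, hdual]

/-- Geometric core of Lemma 3.2: if `v` is a basis of Euclidean space all of whose pairwise
inner products are non-positive, then the dual basis `w` (with `⟪v i, w j⟫ = δ_{ij}`) has all
pairwise inner products non-negative. -/
theorem dual_basis_inner_nonneg (n : ℕ) (v w : Fin n → EuclideanSpace ℝ (Fin n))
    (hindep : LinearIndependent ℝ v)
    (hspan : Submodule.span ℝ (Set.range v) = ⊤)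
    (hangle : ∀ i j, i ≠ j → ⟪v i, v j⟫ ≤ 0)
    (hdual : ∀ i j, ⟪v i, w j⟫ = if i = j then (1 : ℝ) else 0) :
    ∀ i j, 0 ≤ ⟪w i, w j⟫ := by
  intro i j
  obtain ⟨c, hc⟩ :=
    (Submodule.mem_span_range_iff_exists_fun ℝ).mp (hspan ▸ Submodule.mem_top : w i ∈ _)
  have hcoef : 0 ≤ c := nonneg_of_inner_sum_smul_nonneg hindep hangle fun k => by
    rw [hc, hdual]
    split_ifs <;> norm_num
  rw [← hc, inner_sum_smul_of_inner_eq_ite hdual]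
  exact hcoef j
end

section
/- Let M be a symmetric positive definite real n×n matrix with non-positive off-diagonal entries, and let b ∈ ℝⁿ have all entries non-negative. Then the unique solution a of Ma = b has all entries non-negative. -/
open Matrix

/-!
Split `a = a⁺ - a⁻` into its positive and negative parts. As `a⁺` and `a⁻` have disjoint supports
and the off-diagonal entries of `M` are non-positive, `a⁻ ⬝ᵥ M a⁺ ≤ 0`, hence
`0 ≤ a⁻ ⬝ᵥ b = a⁻ ⬝ᵥ M a⁺ - a⁻ ⬝ᵥ M a⁻ ≤ -(a⁻ ⬝ᵥ M a⁻)`. Positive definiteness then forces `a⁻ = 0`.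
-/

namespace Matrix

variable {ι R : Type*} [Fintype ι]

theorem dotProduct_mulVec_nonpos_of_offDiag_nonpos [CommRing R] [PartialOrder R]
    [IsOrderedRing R] {M : Matrix ι ι R} (hM : ∀ i j, i ≠ j → M i j ≤ 0) {x y : ι → R}
    (hx : 0 ≤ x) (hy : 0 ≤ y) (hxy : ∀ i, x i * y i = 0) : x ⬝ᵥ M *ᵥ y ≤ 0 := by
  simp only [dotProduct, mulVec, Finset.mul_sum]
  refine Finset.sum_nonpos fun i _ => Finset.sum_nonpos fun j _ => ?_
  rcases eq_or_ne i j with rfl | hij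
  · rw [mul_left_comm, hxy, mul_zero]
  · exact mul_nonpos_of_nonneg_of_nonpos (hx i)
      (mul_nonpos_of_nonpos_of_nonneg (hM i j hij) (hy j))

theorem PosDef.nonneg_of_mulVec_nonneg [CommRing R] [LinearOrder R] [IsStrictOrderedRing R]
    [StarRing R] [TrivialStar R] {M : Matrix ι ι R} (hM : M.PosDef)
    (hoff : ∀ i j, i ≠ j → M i j ≤ 0) {a : ι → R} (ha : 0 ≤ M *ᵥ a) : 0 ≤ a := by
  have hdisj : ∀ i, a⁻ i * a⁺ i = 0 := fun i => by
    rcases le_total (a i) 0 with h | h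
    · simp [posPart_eq_zero.2 h]
    · simp [negPart_eq_zero.2 h]
  have hcross : a⁻ ⬝ᵥ M *ᵥ a⁺ ≤ 0 :=
    dotProduct_mulVec_nonpos_of_offDiag_nonpos hoff (negPart_nonneg a) (posPart_nonneg a) hdisj
  have hb : 0 ≤ a⁻ ⬝ᵥ M *ᵥ a := dotProduct_nonneg_of_nonneg (negPart_nonneg a) ha
  have hsplit : a⁻ ⬝ᵥ M *ᵥ a = a⁻ ⬝ᵥ M *ᵥ a⁺ - a⁻ ⬝ᵥ M *ᵥ a⁻ := by
    rw [← dotProduct_sub, ← mulVec_sub, posPart_sub_negPart]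
  by_contra hneg
  have hquad : 0 < a⁻ ⬝ᵥ M *ᵥ a⁻ := by
    simpa using hM.dotProduct_mulVec_pos (mt negPart_eq_zero.1 hneg)
  linarith

end Matrix

theorem solution_nonneg_general (n : ℕ) (M : Matrix (Fin n) (Fin n) ℝ)
    (hpos : M.PosDef)
    (hoff : ∀ i j, i ≠ j → M i j ≤ 0)
    (a b : Fin n → ℝ) (hb : ∀ i, 0 ≤ b i)
    (hab : M.mulVec a = b) :
    ∀ i, 0 ≤ a i :=
  hpos.nonneg_of_mulVec_nonneg hoff (hab ▸ hb)

/-- For a symmetric positive definite matrix `M` with non-positive off-diagonal entries and an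
entrywise non-negative vector `b`, the solution `a` of `M a = b` is entrywise non-negative. -/
theorem solution_nonneg (n : ℕ) (M : Matrix (Fin n) (Fin n) ℝ)
    (hsymm : M.IsSymm) (hpos : M.PosDef)
    (hoff : ∀ i j, i ≠ j → M i j ≤ 0)
    (a b : Fin n → ℝ) (hb : ∀ i, 0 ≤ b i)
    (hab : M.mulVec a = b) :
    ∀ i, 0 ≤ a i :=
  solution_nonneg_general n M hpos hoff a b hb hab
end

section
/- If M is a symmetric negative definite n×n matrix with non-negative off-diagonal entries and a ∈ ℝⁿ satisfies Ma = e where e is a vector with all entries non-negative and at least one entry positive, then a_i ≤ 0 for all i and a_j < 0 for at least one j. -/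
/-!
Split `a = a⁺ - a⁻`. Since the off-diagonal entries of `M` are non-negative and `a⁺`, `a⁻` have
disjoint supports, `a⁺ ⬝ᵥ M a⁻ ≥ 0`; together with `a⁺ ⬝ᵥ M a = a⁺ ⬝ᵥ e ≥ 0` this gives
`a⁺ ⬝ᵥ M a⁺ ≥ 0`, so `a⁺ = 0` by negative definiteness. Finally `a ≠ 0` because `e ≠ 0`.
-/

open Matrix

variable {ι R : Type*} [Fintype ι] [CommRing R] [LinearOrder R] [IsOrderedRing R]
  {M : Matrix ι ι R}

theorem dotProduct_mulVec_nonneg_of_mul_eq_zero (hoff : ∀ i j, i ≠ j → 0 ≤ M i j)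
    {p m : ι → R} (hp : 0 ≤ p) (hm : 0 ≤ m) (hpm : ∀ i, p i * m i = 0) :
    0 ≤ p ⬝ᵥ M *ᵥ m := by
  refine Finset.sum_nonneg fun i _ => ?_
  rw [mulVec, dotProduct, Finset.mul_sum]
  refine Finset.sum_nonneg fun j _ => ?_
  obtain rfl | hij := eq_or_ne i j
  · rw [mul_left_comm, hpm, mul_zero]
  · exact mul_nonneg (hp i) (mul_nonneg (hoff i j hij) (hm j))

theorem posPart_dotProduct_mulVec_posPart_nonneg (hoff : ∀ i j, i ≠ j → 0 ≤ M i j)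
    {a : ι → R} (ha : 0 ≤ M *ᵥ a) : 0 ≤ a⁺ ⬝ᵥ M *ᵥ a⁺ := by
  have hsplit : a⁺ = a + a⁻ := sub_eq_iff_eq_add.mp (posPart_sub_negPart a)
  have hdisjoint : ∀ i, a⁺ i * a⁻ i = 0 := fun i => by
    rcases le_total (a i) 0 with h | h
    · simp [posPart_eq_zero.mpr h]
    · simp [negPart_eq_zero.mpr h]
  have hpos : 0 ≤ a⁺ ⬝ᵥ M *ᵥ a := dotProduct_nonneg_of_nonneg (posPart_nonneg a) ha
  have hcross : 0 ≤ a⁺ ⬝ᵥ M *ᵥ a⁻ :=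
    dotProduct_mulVec_nonneg_of_mul_eq_zero hoff (posPart_nonneg a) (negPart_nonneg a) hdisjoint
  calc 0 ≤ a⁺ ⬝ᵥ M *ᵥ a + a⁺ ⬝ᵥ M *ᵥ a⁻ := add_nonneg hpos hcross
    _ = a⁺ ⬝ᵥ M *ᵥ a⁺ := by rw [← dotProduct_add, ← mulVec_add, ← hsplit]

theorem nonpos_of_mulVec_nonneg (hneg : ∀ x : ι → R, x ≠ 0 → x ⬝ᵥ M *ᵥ x < 0)
    (hoff : ∀ i j, i ≠ j → 0 ≤ M i j) {a : ι → R} (ha : 0 ≤ M *ᵥ a) : a ≤ 0 := by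
  rw [← posPart_eq_zero]
  by_contra hne
  exact (hneg _ hne).not_ge (posPart_dotProduct_mulVec_posPart_nonneg hoff ha)

theorem solution_nonpos_general (n : ℕ) (M : Matrix (Fin n) (Fin n) ℝ)
    (hneg : ∀ x : Fin n → ℝ, x ≠ 0 → x ⬝ᵥ M.mulVec x < 0)
    (hoff : ∀ i j, i ≠ j → 0 ≤ M i j)
    (a e : Fin n → ℝ) (hMa : M.mulVec a = e)
    (he : ∀ i, 0 ≤ e i) (hne : e ≠ 0) :
    (∀ i, a i ≤ 0) ∧ ∃ j, a j < 0 := by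
  have ha : a ≤ 0 := nonpos_of_mulVec_nonneg hneg hoff (hMa ▸ he)
  refine ⟨ha, ?_⟩
  by_contra! hnonneg
  exact hne (by rw [← hMa, le_antisymm ha hnonneg, mulVec_zero])

/-- If `M` is symmetric negative definite with non-negative off-diagonal entries and
`M a = e` with `e` entrywise non-negative and non-zero, then `a` is entrywise non-positive
and some entry of `a` is negative. -/
theorem solution_nonpos (n : ℕ) (M : Matrix (Fin n) (Fin n) ℝ)
    (hsymm : M.IsSymm)
    (hneg : ∀ x : Fin n → ℝ, x ≠ 0 → x ⬝ᵥ M.mulVec x < 0)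
    (hoff : ∀ i j, i ≠ j → 0 ≤ M i j)
    (a e : Fin n → ℝ) (hMa : M.mulVec a = e)
    (he : ∀ i, 0 ≤ e i) (hne : e ≠ 0) :
    (∀ i, a i ≤ 0) ∧ ∃ j, a j < 0 :=
  solution_nonpos_general n M hneg hoff a e hMa he hne
end

section
/- Let M be the intersection matrix of a connected negative definite configuration (symmetric integer matrix, negative definite, non-negative off-diagonal entries, and the associated graph connected). If a ∈ ℤⁿ satisfies Ma ≤ 0 entrywise (each coordinate of Ma is ≤ 0) and Ma ≠ 0, then a_i > 0 for every i. -/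
/-!
Write `a = a⁺ - a⁻`. Since the off-diagonal entries of `M` are non-negative and `a⁺`, `a⁻` have
disjoint supports, `a⁻ ⬝ M a⁺ ≥ 0`; together with `a⁻ ⬝ M a ≤ 0` this gives `a⁻ ⬝ M a⁻ ≥ 0`, so
`a⁻ = 0` by negative definiteness. Once `a ≥ 0`, the `i`-th row of `M a ≤ 0` is a sum of
non-negative terms, so `a i = 0` forces `a j = 0` for every neighbour `j` of `i`. By connectedness
a single zero entry would make `a`, hence `M a`, vanish.
-/

open Matrix

lemma SimpleGraph.Reachable.of_adj_closed {V : Type*} {G : SimpleGraph V} {P : V → Prop}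
    {u v : V} (h : G.Reachable u v) (hP : ∀ x y, G.Adj x y → P x → P y) (hu : P u) : P v := by
  rw [SimpleGraph.reachable_iff_reflTransGen] at h
  induction h with
  | refl => exact hu
  | tail _ hadj ih => exact hP _ _ hadj ih

namespace Matrix

variable {ι R : Type*} [Fintype ι] [CommRing R] [LinearOrder R] [IsStrictOrderedRing R]
  {M : Matrix ι ι R}

lemma dotProduct_mulVec_nonneg_of_disjoint_s17 (hoff : ∀ i j, i ≠ j → 0 ≤ M i j)
    {p q : ι → R} (hp : 0 ≤ p) (hq : 0 ≤ q) (hpq : ∀ i, q i * p i = 0) :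
    0 ≤ q ⬝ᵥ M *ᵥ p := by
  refine Finset.sum_nonneg fun i _ => ?_
  rw [mulVec, dotProduct, Finset.mul_sum]
  refine Finset.sum_nonneg fun j _ => ?_
  rcases eq_or_ne i j with rfl | hij
  · rw [mul_left_comm, hpq, mul_zero]
  · exact mul_nonneg (hq i) (mul_nonneg (hoff i j hij) (hp j))

lemma nonneg_of_mulVec_nonpos (hneg : ∀ x : ι → R, x ≠ 0 → x ⬝ᵥ M *ᵥ x < 0)
    (hoff : ∀ i j, i ≠ j → 0 ≤ M i j) {a : ι → R} (hle : M *ᵥ a ≤ 0) : 0 ≤ a := by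
  have hdisjoint : ∀ i, a⁻ i * a⁺ i = 0 := fun i => by
    rcases le_total (a i) 0 with h | h
    · simp [posPart_eq_zero.mpr h]
    · simp [negPart_eq_zero.mpr h]
  have hcross : 0 ≤ a⁻ ⬝ᵥ M *ᵥ a⁺ :=
    dotProduct_mulVec_nonneg_of_disjoint_s17 hoff (posPart_nonneg a) (negPart_nonneg a) hdisjoint
  have hpair : a⁻ ⬝ᵥ M *ᵥ a ≤ 0 :=
    Finset.sum_nonpos fun i _ => mul_nonpos_of_nonneg_of_nonpos (negPart_nonneg a i) (hle i)
  have hsplit : a⁻ ⬝ᵥ M *ᵥ a = a⁻ ⬝ᵥ M *ᵥ a⁺ - a⁻ ⬝ᵥ M *ᵥ a⁻ := by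
    rw [← dotProduct_sub, ← mulVec_sub, posPart_sub_negPart]
  by_contra hnonneg
  have hne : a⁻ ≠ 0 := fun h => hnonneg (negPart_eq_zero.mp h)
  linarith [hneg _ hne]

lemma apply_eq_zero_of_mulVec_apply_nonpos (hoff : ∀ i j, i ≠ j → 0 ≤ M i j) {a : ι → R}
    (ha : 0 ≤ a) {i j : ι} (hle : (M *ᵥ a) i ≤ 0) (hi : a i = 0) (hij : 0 < M i j) :
    a j = 0 := by
  have hterm : ∀ k ∈ Finset.univ, 0 ≤ M i k * a k := fun k _ => by
    rcases eq_or_ne i k with rfl | hik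
    · rw [hi, mul_zero]
    · exact mul_nonneg (hoff i k hik) (ha k)
  have hrow : ∑ k, M i k * a k = 0 := le_antisymm hle (Finset.sum_nonneg hterm)
  have hj := (Finset.sum_eq_zero_iff_of_nonneg hterm).mp hrow j (Finset.mem_univ j)
  exact (mul_eq_zero.mp hj).resolve_left hij.ne'

end Matrix

/-- Strict version of Lemma 3.2 for connected configurations: if `M` is a symmetric negative
definite integer matrix with non-negative off-diagonal entries whose associated graph
(edges where `M i j > 0`) is connected, and `M a ≤ 0` entrywise with `M a ≠ 0`, then every
entry of `a` is positive. -/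
theorem antinef_full_support (n : ℕ) (M : Matrix (Fin n) (Fin n) ℤ)
    (hsymm : M.IsSymm)
    (hneg : ∀ x : Fin n → ℤ, x ≠ 0 → x ⬝ᵥ M.mulVec x < 0)
    (hoff : ∀ i j, i ≠ j → 0 ≤ M i j)
    (hconn : (SimpleGraph.fromRel (fun i j : Fin n => 0 < M i j)).Connected)
    (a : Fin n → ℤ)
    (hle : ∀ i, M.mulVec a i ≤ 0)
    (hne : M.mulVec a ≠ 0) :
    ∀ i, 0 < a i := by
  have ha : 0 ≤ a := nonneg_of_mulVec_nonpos hneg hoff hle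
  intro i
  refine (ha i).lt_of_ne' fun hi => hne ?_
  have hzero : a = 0 := funext fun j =>
    (hconn.preconnected i j).of_adj_closed (fun x y hxy hx => by
      have hpos : 0 < M x y := hxy.2.elim id fun h => hsymm.apply x y ▸ h
      exact apply_eq_zero_of_mulVec_apply_nonpos hoff ha (hle x) hx hpos) hi
  rw [hzero, mulVec_zero]
end
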